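/- arXiv:2008.09560 — 3 statements merged into one kernel-verified Lean document; each statement's English description precedes it below -/
import Mathlib

section
/- Let p be an odd prime and let n ≥ 1 be an integer. Let (a_k)_{k≥0} be a sequence in ℚ_p with a_0 = 0 and such that ‖k · a_k‖_p ≤ 1 for every k ≥ 1 (i.e. the formal derivative ∑_{k≥1} k a_k t^{k-1} of the power series F(t) = ∑_{k≥1} a_k t^k has ℤ_p-coefficients). Suppose there exists x ∈ ℚ_p with x ≠ 0 and ‖x‖_p ≤ p^{-n} such that the series ∑_{k≥1} a_k x^k converges with sum 0. Then ‖a_1‖_p ≤ p^{-n}. -/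
/-! For `k ≥ 2` and `p` odd, `v_p(k) ≤ k - 2`, so `‖k a_k‖ ≤ 1` gives `‖a_k‖ ≤ p^(k-2)` and hence
`‖a_k x^k‖ ≤ ‖x‖ p^(-n) (p^(1-n))^(k-2) ≤ ‖x‖ p^(-n)`. As `∑ a_k x^k = 0`, the ultrametric
inequality bounds the first term `a_1 x` by the supremum of the others. -/

theorem norm_le_of_hasSum_zero_of_forall_norm_succ_le {E : Type*} [NormedAddCommGroup E]
    [IsUltrametricDist E] {f : ℕ → E} {C : ℝ} (hf : HasSum f 0) (h : ∀ k, ‖f (k + 1)‖ ≤ C) :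
    ‖f 0‖ ≤ C := by
  have htail : HasSum (fun k ↦ f (k + 1)) (-f 0) := by
    simpa using (hasSum_nat_add_iff' 1).mpr hf
  rw [← norm_neg, ← htail.tsum_eq]
  exact IsUltrametricDist.norm_tsum_le_of_forall_le h

theorem norm_mul_pow_add_two_le {K : Type*} [NormedDivisionRing K] {c x : K} {q r : ℝ} {k : ℕ}
    (hc : ‖c‖ ≤ q ^ k) (hx : ‖x‖ ≤ r) (hq : 0 ≤ q) (hr : 0 ≤ r) (hqr : q * r ≤ 1) :
    ‖c * x ^ (k + 2)‖ ≤ ‖x‖ * r :=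
  calc ‖c * x ^ (k + 2)‖ = ‖c‖ * ‖x‖ ^ (k + 1) * ‖x‖ := by rw [norm_mul, norm_pow]; ring
    _ ≤ q ^ k * r ^ (k + 1) * ‖x‖ := by gcongr
    _ = ‖x‖ * r * (q * r) ^ k := by ring
    _ ≤ ‖x‖ * r := mul_le_of_le_one_right (by positivity) (pow_le_one₀ (by positivity) hqr)

theorem add_two_lt_pow_succ {p : ℕ} (hp : 3 ≤ p) (k : ℕ) : k + 2 < p ^ (k + 1) :=
  calc k + 2 < 1 + (k + 1) * 2 := by omega
    _ ≤ (1 + 2) ^ (k + 1) := one_add_le_pow_of_two_add_nonneg (by omega) _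
    _ ≤ p ^ (k + 1) := Nat.pow_le_pow_left hp _

theorem padicValNat_add_two_le {p : ℕ} (hp : 3 ≤ p) (k : ℕ) : padicValNat p (k + 2) ≤ k :=
  Nat.lt_succ_iff.mp <| (padicValNat_le_nat_log _).trans_lt <|
    Nat.log_lt_of_lt_pow (by omega) (add_two_lt_pow_succ hp k)

namespace Padic

variable {p : ℕ} [Fact p.Prime]

theorem norm_natCast_eq_zpow_neg_padicValNat {m : ℕ} (hm : m ≠ 0) :
    ‖(m : ℚ_[p])‖ = (p : ℝ) ^ (-(padicValNat p m : ℤ)) := by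
  rw [norm_eq_zpow_neg_valuation (Nat.cast_ne_zero.mpr hm), valuation_natCast]

theorem norm_le_pow_padicValNat_of_norm_natCast_mul_le_one {m : ℕ} (hm : m ≠ 0) {y : ℚ_[p]}
    (h : ‖(m : ℚ_[p]) * y‖ ≤ 1) : ‖y‖ ≤ (p : ℝ) ^ padicValNat p m := by
  have hp : (0 : ℝ) < p := Nat.cast_pos.mpr (Fact.out : p.Prime).pos
  rwa [norm_mul, norm_natCast_eq_zpow_neg_padicValNat hm, zpow_neg, zpow_natCast,
    inv_mul_le_iff₀ (pow_pos hp _), mul_one] at h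

end Padic

theorem stmt_0_general (p : ℕ) [Fact p.Prime] (hodd : Odd p) (n : ℕ) (hn : 1 ≤ n)
    (a : ℕ → ℚ_[p])
    (hint : ∀ k : ℕ, 1 ≤ k → ‖(k : ℚ_[p]) * a k‖ ≤ 1)
    (x : ℚ_[p]) (hx0 : x ≠ 0) (hx : ‖x‖ ≤ (p : ℝ) ^ (-(n : ℤ)))
    (hsum : HasSum (fun k : ℕ => a (k + 1) * x ^ (k + 1)) 0) :
    ‖a 1‖ ≤ (p : ℝ) ^ (-(n : ℤ)) := by
  have hp3 : 3 ≤ p := (Fact.out : p.Prime).odd_iff.mp hodd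
  have hp1 : (1 : ℝ) ≤ p := by exact_mod_cast (Fact.out : p.Prime).one_le
  have hpr : (p : ℝ) * (p : ℝ) ^ (-(n : ℤ)) ≤ 1 := by
    rw [← zpow_one_add₀ (by positivity)]
    exact zpow_le_one_of_nonpos₀ hp1 (by omega)
  have hcoeff (k : ℕ) : ‖a (k + 2)‖ ≤ (p : ℝ) ^ k :=
    (Padic.norm_le_pow_padicValNat_of_norm_natCast_mul_le_one (by omega) (hint _ (by omega))).trans
      (pow_le_pow_right₀ hp1 (padicValNat_add_two_le hp3 k))
  have hfirst := norm_le_of_hasSum_zero_of_forall_norm_succ_le hsum fun k ↦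
    norm_mul_pow_add_two_le (hcoeff k) hx (by positivity) (by positivity) hpr
  rw [zero_add, pow_one, norm_mul, mul_comm] at hfirst
  exact le_of_mul_le_mul_left hfirst (norm_pos_iff.mpr hx0)

/-- Newton polygon computation (odd prime case) underlying Lemma 3.2.
If `a₀ = 0`, the formal derivative `∑_{k≥1} k a_k t^{k-1}` has `ℤ_p`-coefficients
(i.e. `‖k a_k‖_p ≤ 1` for all `k ≥ 1`), and there is a nonzero `x` with
`‖x‖_p ≤ p^{-n}` at which `∑_{k≥1} a_k x^k = 0`, then `‖a₁‖_p ≤ p^{-n}`. -/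
theorem stmt_0 (p : ℕ) [Fact p.Prime] (hodd : Odd p) (n : ℕ) (hn : 1 ≤ n)
    (a : ℕ → ℚ_[p]) (ha0 : a 0 = 0)
    (hint : ∀ k : ℕ, 1 ≤ k → ‖(k : ℚ_[p]) * a k‖ ≤ 1)
    (x : ℚ_[p]) (hx0 : x ≠ 0) (hx : ‖x‖ ≤ (p : ℝ) ^ (-(n : ℤ)))
    (hsum : HasSum (fun k : ℕ => a (k + 1) * x ^ (k + 1)) 0) :
    ‖a 1‖ ≤ (p : ℝ) ^ (-(n : ℤ)) :=
  stmt_0_general p hodd n hn a hint x hx0 hx hsum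
end

section
/- Let p be any prime and let n ≥ 1 be an integer. Let (a_k)_{k≥0} be a sequence in ℚ_p with a_0 = 0 and such that ‖k · a_k‖_p ≤ 1 for every k ≥ 1 (i.e. the formal derivative ∑_{k≥1} k a_k t^{k-1} of the power series F(t) = ∑_{k≥1} a_k t^k has ℤ_p-coefficients). Suppose there exists x ∈ ℚ_p with x ≠ 0 and ‖x‖_p ≤ p^{-n} such that the series ∑_{k≥1} a_k x^k converges with sum 0. Then ‖a_1‖_p ≤ p^{1-n}. -/
/-!
Write `a₁ x = -∑_{k≥2} a_k x^k`. Since `‖k‖_p ≥ p^{-v_p(k)} ≥ p^{1-k}`, the hypothesis gives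
`‖a_k‖ ≤ p^{k-1}`, so every tail term is at most `(p‖x‖)^{k-1} ‖x‖ ≤ p^{1-n} ‖x‖`; the ultrametric
inequality bounds the tail sum by the same quantity, and dividing by `‖x‖` gives the claim.
-/
lemma IsUltrametricDist.norm_le_of_hasSum {E ι : Type*} [SeminormedAddCommGroup E]
    [IsUltrametricDist E] {f : ι → E} {s : E} {C : ℝ} (h : HasSum f s) (hC : 0 ≤ C)
    (hf : ∀ i, ‖f i‖ ≤ C) : ‖s‖ ≤ C :=
  le_of_tendsto' ((continuous_norm.tendsto s).comp h) fun _ ↦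
    norm_sum_le_of_forall_le_of_nonneg hC fun i _ ↦ hf i

namespace Padic

variable {p : ℕ} [Fact p.Prime]

lemma norm_natCast_inv_le_pow {k : ℕ} (hk : k ≠ 0) : ‖(k : ℚ_[p])‖⁻¹ ≤ (p : ℝ) ^ (k - 1) := by
  have hv : padicValNat p k ≤ k - 1 :=
    Nat.le_sub_one_of_lt ((padicValNat_le_nat_log k).trans_lt (Nat.log_lt_self p hk))
  rw [norm_eq_zpow_neg_valuation (Nat.cast_ne_zero.mpr hk), valuation_natCast, zpow_neg, inv_inv,
    zpow_natCast]
  exact pow_le_pow_right₀ (by exact_mod_cast (Fact.out : p.Prime).one_le) hv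

lemma norm_le_pow_of_norm_natCast_mul_le_one {k : ℕ} (hk : k ≠ 0) {b : ℚ_[p]}
    (h : ‖(k : ℚ_[p]) * b‖ ≤ 1) : ‖b‖ ≤ (p : ℝ) ^ (k - 1) := by
  have hk' : ‖(k : ℚ_[p])‖ ≠ 0 := norm_ne_zero_iff.mpr (Nat.cast_ne_zero.mpr hk)
  calc ‖b‖ = ‖(k : ℚ_[p])‖⁻¹ * ‖(k : ℚ_[p]) * b‖ := by
        rw [norm_mul, inv_mul_cancel_left₀ hk']
    _ ≤ ‖(k : ℚ_[p])‖⁻¹ * 1 := by gcongr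
    _ ≤ (p : ℝ) ^ (k - 1) := by rw [mul_one]; exact norm_natCast_inv_le_pow hk

lemma norm_mul_pow_le_of_norm_natCast_mul_le_one {n k : ℕ} (hn : 1 ≤ n) (hk : 2 ≤ k)
    {b x : ℚ_[p]} (hb : ‖(k : ℚ_[p]) * b‖ ≤ 1) (hx : ‖x‖ ≤ (p : ℝ) ^ (-(n : ℤ))) :
    ‖b * x ^ k‖ ≤ (p : ℝ) ^ ((1 : ℤ) - n) * ‖x‖ := by
  have hp : (1 : ℝ) ≤ p := by exact_mod_cast (Fact.out : p.Prime).one_le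
  have hs : (p : ℝ) * ‖x‖ ≤ (p : ℝ) ^ ((1 : ℤ) - n) := by
    rw [zpow_sub₀ (by positivity), zpow_one, div_eq_mul_inv, ← zpow_neg]
    gcongr
  have hs1 : (p : ℝ) ^ ((1 : ℤ) - n) ≤ 1 := zpow_le_one_of_nonpos₀ hp (by omega)
  obtain ⟨j, rfl⟩ : ∃ j, k = j + 2 := ⟨k - 2, by omega⟩
  calc ‖b * x ^ (j + 2)‖ = ‖b‖ * ‖x‖ ^ (j + 1) * ‖x‖ := by
        rw [norm_mul, norm_pow, pow_succ, mul_assoc]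
    _ ≤ (p : ℝ) ^ (j + 1) * ‖x‖ ^ (j + 1) * ‖x‖ := by
        gcongr
        exact norm_le_pow_of_norm_natCast_mul_le_one (by omega) hb
    _ = ((p : ℝ) * ‖x‖) ^ (j + 1) * ‖x‖ := by rw [mul_pow]
    _ ≤ ((p : ℝ) * ‖x‖) * ‖x‖ := by
        gcongr
        exact pow_le_of_le_one (by positivity) (hs.trans hs1) (by omega)
    _ ≤ (p : ℝ) ^ ((1 : ℤ) - n) * ‖x‖ := by gcongr

end Padic

theorem stmt_1_general (p : ℕ) [Fact p.Prime] (n : ℕ) (hn : 1 ≤ n)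
    (a : ℕ → ℚ_[p])
    (hint : ∀ k : ℕ, 1 ≤ k → ‖(k : ℚ_[p]) * a k‖ ≤ 1)
    (x : ℚ_[p]) (hx0 : x ≠ 0) (hx : ‖x‖ ≤ (p : ℝ) ^ (-(n : ℤ)))
    (hsum : HasSum (fun k : ℕ => a (k + 1) * x ^ (k + 1)) 0) :
    ‖a 1‖ ≤ (p : ℝ) ^ ((1 : ℤ) - (n : ℤ)) := by
  have htail : HasSum (fun k : ℕ => a (k + 2) * x ^ (k + 2)) (-(a 1 * x)) := by
    simpa using (hasSum_nat_add_iff' 1).mpr hsum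
  have hbound : ‖a 1‖ * ‖x‖ ≤ (p : ℝ) ^ ((1 : ℤ) - n) * ‖x‖ := by
    simpa using IsUltrametricDist.norm_le_of_hasSum htail (by positivity) fun k ↦
      Padic.norm_mul_pow_le_of_norm_natCast_mul_le_one hn (by omega) (hint (k + 2) (by omega)) hx
  exact le_of_mul_le_mul_right hbound (norm_pos_iff.mpr hx0)

/-- Newton polygon computation (any prime) underlying Lemma 3.2.
If `a₀ = 0`, the formal derivative `∑_{k≥1} k a_k t^{k-1}` has `ℤ_p`-coefficients,
and there is a nonzero `x` with `‖x‖_p ≤ p^{-n}` at which `∑_{k≥1} a_k x^k = 0`,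
then `‖a₁‖_p ≤ p^{1-n}`. -/
theorem stmt_1 (p : ℕ) [Fact p.Prime] (n : ℕ) (hn : 1 ≤ n)
    (a : ℕ → ℚ_[p]) (ha0 : a 0 = 0)
    (hint : ∀ k : ℕ, 1 ≤ k → ‖(k : ℚ_[p]) * a k‖ ≤ 1)
    (x : ℚ_[p]) (hx0 : x ≠ 0) (hx : ‖x‖ ≤ (p : ℝ) ^ (-(n : ℤ)))
    (hsum : HasSum (fun k : ℕ => a (k + 1) * x ^ (k + 1)) 0) :
    ‖a 1‖ ≤ (p : ℝ) ^ ((1 : ℤ) - (n : ℤ)) :=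
  stmt_1_general p n hn a hint x hx0 hx hsum
end

section
/- Let p be any prime and let n ≥ 1 be an integer. Let (a_k)_{k≥0} be a sequence in ℚ_p such that ‖k · a_k‖_p ≤ 1 for every k ≥ 1 (i.e. the formal derivative ∑_{k≥1} k a_k t^{k-1} of the power series F(t) = ∑_{k≥0} a_k t^k has ℤ_p-coefficients). Suppose x, y ∈ ℚ_p are distinct points with ‖x‖_p ≤ p^{-n} and ‖y‖_p ≤ p^{-n}, and that there is some s ∈ ℚ_p such that ∑_{k≥0} a_k x^k and ∑_{k≥0} a_k y^k both converge with the same sum s. Then the derivative series ∑_{k≥1} k a_k x^{k-1} converges and ‖∑_{k≥1} k a_k x^{k-1}‖_p ≤ p^{1-n}. -/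
/-!
Since `F(x) = F(y)`, the series `∑ a_k (x^k - y^k)/(x - y)` sums to `0`, so subtracting it from
`F'(x) = ∑ k a_k x^(k-1)` termwise gives `F'(x) = ∑ a_k ∑_{j<k} (x^(k-1) - x^j y^(k-1-j))`.
The `k`-th term vanishes for `k ≤ 1`; otherwise, as `‖a_k‖ ≤ 1/‖k‖ ≤ k`, it has norm at most
`k p^(-n(k-1)) ≤ p^(1-n)`, and the ultrametric inequality passes this bound to the sum.
-/

open Finset

section SlopeDefect

variable {K : Type*}

/-- The `k`-th term of `F'(x)` minus that of the slope `(F(x) - F(y))/(x - y)`,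
for `F = ∑ a_k t^k`. -/
def slopeDefect [Field K] (a : ℕ → K) (x y : K) (k : ℕ) : K :=
  a k * ∑ j ∈ range k, (x ^ (k - 1) - x ^ j * y ^ (k - 1 - j))

lemma slopeDefect_eq [Field K] {a : ℕ → K} {x y : K} (hxy : x ≠ y) (k : ℕ) :
    slopeDefect a x y k = k * a k * x ^ (k - 1) - a k * ((x ^ k - y ^ k) / (x - y)) := by
  rw [slopeDefect, sum_sub_distrib, sum_const, card_range, nsmul_eq_mul, geom₂_sum hxy]
  ring

lemma hasSum_slopeDefect [Field K] [TopologicalSpace K] [IsTopologicalRing K]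
    {a : ℕ → K} {x y s d : K} (hxy : x ≠ y)
    (hsx : HasSum (fun k => a k * x ^ k) s) (hsy : HasSum (fun k => a k * y ^ k) s)
    (hd : HasSum (fun k => k * a k * x ^ (k - 1)) d) :
    HasSum (slopeDefect a x y) d := by
  have hslope : HasSum (fun k => a k * ((x ^ k - y ^ k) / (x - y))) 0 := by
    convert (hsx.sub hsy).div_const (x - y) using 1
    · ext k
      ring
    · rw [sub_self, zero_div]
  simpa only [← slopeDefect_eq hxy, sub_zero] using hd.sub hslope

lemma norm_slopeDefect_le [NormedField K] [IsUltrametricDist K] (a : ℕ → K) {x y : K} {r : ℝ}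
    (hx : ‖x‖ ≤ r) (hy : ‖y‖ ≤ r) (k : ℕ) :
    ‖slopeDefect a x y k‖ ≤ ‖a k‖ * r ^ (k - 1) := by
  have hr : 0 ≤ r := (norm_nonneg x).trans hx
  rw [slopeDefect, norm_mul]
  gcongr
  refine IsUltrametricDist.norm_sum_le_of_forall_le_of_nonneg (by positivity) fun j hj => ?_
  have hjk : j ≤ k - 1 := by grind
  rw [sub_eq_add_neg]
  refine (IsUltrametricDist.norm_add_le_max _ _).trans (max_le ?_ ?_)
  · rw [norm_pow]
    gcongr
  · calc ‖-(x ^ j * y ^ (k - 1 - j))‖ = ‖x‖ ^ j * ‖y‖ ^ (k - 1 - j) := by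
          rw [norm_neg, norm_mul, norm_pow, norm_pow]
      _ ≤ r ^ j * r ^ (k - 1 - j) := by gcongr
      _ = r ^ (k - 1) := by rw [← pow_add, Nat.add_sub_cancel' hjk]

end SlopeDefect

lemma natCast_mul_pow_pred_le {b : ℕ} (hb : 1 < b) {r : ℝ} (hr0 : 0 ≤ r) (hrb : r ≤ (b : ℝ)⁻¹)
    {k : ℕ} (hk : 2 ≤ k) : k * r ^ (k - 1) ≤ b * r := by
  obtain ⟨m, rfl⟩ := Nat.exists_eq_add_of_le' hk
  have hm : m + 2 ≤ b ^ (m + 1) := Nat.lt_pow_self hb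
  have hb0 : (b : ℝ) ≠ 0 := by positivity
  calc ((m + 2 : ℕ) : ℝ) * r ^ (m + 2 - 1) = (m + 2 : ℕ) * r ^ m * r := by
        rw [show m + 2 - 1 = m + 1 by omega, pow_succ, mul_assoc]
    _ ≤ (b : ℝ) ^ (m + 1) * (b : ℝ)⁻¹ ^ m * r := by gcongr; exact_mod_cast hm
    _ = b * r := by
        rw [inv_pow, pow_succ']
        field_simp

namespace Padic

variable {p : ℕ} [Fact p.Prime]

lemma inv_norm_natCast_le {k : ℕ} (hk : k ≠ 0) : ‖(k : ℚ_[p])‖⁻¹ ≤ k := by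
  rw [norm_eq_zpow_neg_valuation (Nat.cast_ne_zero.mpr hk), valuation_natCast, zpow_neg, inv_inv,
    zpow_natCast]
  exact_mod_cast Nat.le_of_dvd (Nat.pos_of_ne_zero hk) pow_padicValNat_dvd

lemma norm_le_natCast_of_norm_natCast_mul_le_one {k : ℕ} (hk : k ≠ 0) {b : ℚ_[p]}
    (h : ‖(k : ℚ_[p]) * b‖ ≤ 1) : ‖b‖ ≤ k := by
  have hk' : 0 < ‖(k : ℚ_[p])‖ := norm_pos_iff.mpr (Nat.cast_ne_zero.mpr hk)
  rw [norm_mul] at h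
  have hb : ‖b‖ ≤ ‖(k : ℚ_[p])‖⁻¹ := by simpa using (le_inv_mul_iff₀ hk').mpr h
  exact hb.trans (inv_norm_natCast_le hk)

end Padic

/-- Lemma 3.2 of the paper (two-zero form, any prime, including `p = 2`).
If the formal derivative of `F(t) = ∑_{k≥0} a_k t^k` has `ℤ_p`-coefficients and `F`
takes the same value at two distinct points `x ≠ y` of norm at most `p^{-n}`, then the
derivative series `∑_{k≥1} k a_k x^{k-1}` converges to a value of norm at most `p^{1-n}`. -/
theorem stmt_3 (p : ℕ) [Fact p.Prime] (n : ℕ) (hn : 1 ≤ n)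
    (a : ℕ → ℚ_[p])
    (hint : ∀ k : ℕ, 1 ≤ k → ‖(k : ℚ_[p]) * a k‖ ≤ 1)
    (x y : ℚ_[p]) (hxy : x ≠ y)
    (hx : ‖x‖ ≤ (p : ℝ) ^ (-(n : ℤ))) (hy : ‖y‖ ≤ (p : ℝ) ^ (-(n : ℤ)))
    (s : ℚ_[p])
    (hsx : HasSum (fun k : ℕ => a k * x ^ k) s)
    (hsy : HasSum (fun k : ℕ => a k * y ^ k) s) :
    ∃ d : ℚ_[p],
      HasSum (fun k : ℕ => ((k + 1 : ℕ) : ℚ_[p]) * a (k + 1) * x ^ k) d ∧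
      ‖d‖ ≤ (p : ℝ) ^ ((1 : ℤ) - (n : ℤ)) := by
  have hp : 1 < p := (Fact.out : p.Prime).one_lt
  set r : ℝ := (p : ℝ) ^ (-(n : ℤ))
  have hr0 : 0 ≤ r := by positivity
  have hrp : r ≤ (p : ℝ)⁻¹ := by
    rw [← zpow_neg_one]
    exact zpow_le_zpow_right₀ (by exact_mod_cast hp.le) (by omega)
  have hr1 : r < 1 := hrp.trans_lt (inv_lt_one_of_one_lt₀ (by exact_mod_cast hp))
  obtain ⟨d, hd⟩ : Summable (fun k : ℕ => ((k + 1 : ℕ) : ℚ_[p]) * a (k + 1) * x ^ k) := by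
    refine Summable.of_norm_bounded (summable_geometric_of_lt_one hr0 hr1) fun k => ?_
    rw [norm_mul, norm_pow, ← one_mul (r ^ k)]
    exact mul_le_mul (hint (k + 1) (by omega)) (by gcongr) (by positivity) zero_le_one
  refine ⟨d, hd, ?_⟩
  have hderiv : HasSum (fun k : ℕ => k * a k * x ^ (k - 1)) d := by
    rw [← hasSum_nat_add_iff' 1]
    simpa using hd
  have hbound (k : ℕ) : ‖slopeDefect a x y k‖ ≤ p * r := by
    rcases lt_or_ge k 2 with hk | hk
    · interval_cases k <;> simp [slopeDefect] <;> positivity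
    calc ‖slopeDefect a x y k‖ ≤ ‖a k‖ * r ^ (k - 1) := norm_slopeDefect_le a hx hy k
      _ ≤ k * r ^ (k - 1) := by
          gcongr
          exact Padic.norm_le_natCast_of_norm_natCast_mul_le_one (by omega) (hint k (by omega))
      _ ≤ p * r := natCast_mul_pow_pred_le hp hr0 hrp hk
  rw [sub_eq_add_neg, zpow_add₀ (by positivity), zpow_one,
    ← (hasSum_slopeDefect hxy hsx hsy hderiv).tsum_eq]
  exact IsUltrametricDist.norm_tsum_le_of_forall_le_of_nonneg (by positivity) hbound
end
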